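/- Fix y ≠ 0 and let g(σ) = CRPS of N(0,σ²) against y, i.e., g(σ) = ∫ (Φ(x/σ) - 𝟙{x≥y})² dx. Then g'(σ) < 0 for 0 < σ < |y|/√(ln 2) and g'(σ) > 0 for σ > |y|/√(ln 2); in particular g is strictly decreasing then strictly increasing, so σ* = |y|/√(ln 2) is the unique global minimizer. -/

import Mathlib

open MeasureTheory Set Real Filter Topology intervalIntegral

/-- Standard normal CDF. -/
noncomputable def stdNormalCDF (x : ℝ) : ℝ :=
  ∫ t in Set.Iic x, Real.exp (-t ^ 2 / 2) / Real.sqrt (2 * Real.pi)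

/-- CRPS of the zero-mean Gaussian forecast `N(0, σ²)` against observation `y`. -/
noncomputable def gaussCRPS (y : ℝ) (σ : ℝ) : ℝ :=
  ∫ x : ℝ, (stdNormalCDF (x / σ) - (if y ≤ x then (1 : ℝ) else 0)) ^ 2

noncomputable def nPdf (t : ℝ) : ℝ := Real.exp (-t ^ 2 / 2) / Real.sqrt (2 * Real.pi)

lemma continuous_nPdf : Continuous nPdf := by
  unfold nPdf
  exact (Real.continuous_exp.comp (by continuity)).div_const _

lemma nPdf_pos (t : ℝ) : 0 < nPdf t :=
  div_pos (Real.exp_pos _) (Real.sqrt_pos.2 (by positivity))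

lemma nPdf_nonneg (t : ℝ) : 0 ≤ nPdf t := (nPdf_pos t).le

lemma one_le_sqrt_two_pi : (1 : ℝ) ≤ Real.sqrt (2 * Real.pi) := by
  rw [show (1:ℝ) = Real.sqrt 1 by simp]
  exact Real.sqrt_le_sqrt (by nlinarith [Real.pi_gt_three])

lemma nPdf_le_one (t : ℝ) : nPdf t ≤ 1 := by
  unfold nPdf
  rw [div_le_one (by positivity)]
  calc Real.exp (-t^2/2) ≤ 1 := Real.exp_le_one_iff.2 (by nlinarith [sq_nonneg t])
    _ ≤ _ := one_le_sqrt_two_pi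

lemma nPdf_neg (t : ℝ) : nPdf (-t) = nPdf t := by simp [nPdf]

lemma integrable_nPdf : Integrable nPdf := by
  have h := integrable_exp_neg_mul_sq (by norm_num : (0:ℝ) < 1/2)
  have : nPdf = fun t => Real.exp (-(1/2) * t^2) / Real.sqrt (2*Real.pi) := by
    funext t; unfold nPdf; ring_nf
  rw [this]
  exact h.div_const _

lemma integral_nPdf : ∫ t, nPdf t = 1 := by
  have : ∫ t, nPdf t = (∫ t, Real.exp (-(1/2) * t^2)) / Real.sqrt (2*Real.pi) := by
    rw [← MeasureTheory.integral_div]; congr 1; funext t; unfold nPdf; ring_nf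
  rw [this, integral_gaussian]
  rw [show Real.pi / (1/2) = 2 * Real.pi by ring]
  exact div_self (by positivity)

lemma hasDerivAt_nPdf (t : ℝ) : HasDerivAt nPdf (-t * nPdf t) t := by
  have h : HasDerivAt (fun t : ℝ => -t^2/2) (-t) t := by
    have := ((hasDerivAt_pow 2 t).neg.div_const 2)
    refine this.congr_deriv (Eq.symm ?_)
    simp; ring
  have h2 := (h.exp).div_const (Real.sqrt (2*Real.pi))
  refine h2.congr_deriv (Eq.symm ?_)
  unfold nPdf; ring

lemma stdNormalCDF_eq (x : ℝ) : stdNormalCDF x = ∫ t in Set.Iic x, nPdf t := rfl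

lemma hasDerivAt_stdNormalCDF (x : ℝ) : HasDerivAt stdNormalCDF (nPdf x) x := by
  have key : ∀ u : ℝ, stdNormalCDF u = stdNormalCDF 0 + ∫ t in (0:ℝ)..u, nPdf t := by
    intro u
    have := intervalIntegral.integral_Iic_sub_Iic (integrable_nPdf.integrableOn)
      (integrable_nPdf.integrableOn) (a := 0) (b := u)
    rw [stdNormalCDF_eq, stdNormalCDF_eq]
    linarith
  have h1 : HasDerivAt (fun u => ∫ t in (0:ℝ)..u, nPdf t) (nPdf x) x :=
    intervalIntegral.integral_hasDerivAt_right (continuous_nPdf.intervalIntegrable _ _)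
      (continuous_nPdf.stronglyMeasurable.stronglyMeasurableAtFilter) continuous_nPdf.continuousAt
  exact (h1.const_add (stdNormalCDF 0)).congr_of_eventuallyEq
    (Filter.Eventually.of_forall fun u => key u)

lemma continuous_stdNormalCDF : Continuous stdNormalCDF :=
  continuous_iff_continuousAt.2 fun x => (hasDerivAt_stdNormalCDF x).continuousAt

lemma stdNormalCDF_nonneg (x : ℝ) : 0 ≤ stdNormalCDF x := by
  rw [stdNormalCDF_eq]
  exact setIntegral_nonneg measurableSet_Iic fun t _ => nPdf_nonneg t

lemma stdNormalCDF_le_one (x : ℝ) : stdNormalCDF x ≤ 1 := by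
  rw [stdNormalCDF_eq, ← integral_nPdf]
  exact setIntegral_le_integral integrable_nPdf (Filter.Eventually.of_forall nPdf_nonneg)

lemma stdNormalCDF_add_neg (x : ℝ) : stdNormalCDF x + stdNormalCDF (-x) = 1 := by
  have h1 : stdNormalCDF (-x) = ∫ t in Set.Ioi x, nPdf t := by
    rw [stdNormalCDF_eq, ← integral_comp_neg_Ioi]
    congr 1; funext t; rw [nPdf_neg]
  rw [stdNormalCDF_eq, h1, ← integral_nPdf]
  exact integral_Iic_add_Ioi integrable_nPdf.integrableOn integrable_nPdf.integrableOn

lemma stdNormalCDF_le_exp {x : ℝ} (hx : x ≤ -2) : stdNormalCDF x ≤ Real.exp x := by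
  have h1 : ∀ t ∈ Set.Iic x, nPdf t ≤ Real.exp t := by
    intro t ht
    have ht' : t ≤ -2 := le_trans ht hx
    calc nPdf t ≤ Real.exp (-t^2/2) := by
          unfold nPdf
          exact div_le_self (Real.exp_pos _).le (by
            rw [show (1:ℝ) = Real.sqrt 1 by simp]
            exact Real.sqrt_le_sqrt (by nlinarith [Real.pi_gt_three]))
      _ ≤ Real.exp t := Real.exp_le_exp.2 (by nlinarith)
  calc stdNormalCDF x = ∫ t in Set.Iic x, nPdf t := rfl
    _ ≤ ∫ t in Set.Iic x, Real.exp t :=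
        setIntegral_mono_on integrable_nPdf.integrableOn (integrableOn_exp_Iic x)
          measurableSet_Iic h1
    _ = Real.exp x := integral_exp_Iic x

lemma tendsto_stdNormalCDF_atBot : Tendsto stdNormalCDF atBot (𝓝 0) := by
  apply squeeze_zero' (Filter.Eventually.of_forall stdNormalCDF_nonneg)
    (Filter.eventually_atBot.2 ⟨-2, fun x hx => stdNormalCDF_le_exp hx⟩)
    Real.tendsto_exp_atBot

lemma tendsto_stdNormalCDF_atTop : Tendsto stdNormalCDF atTop (𝓝 1) := by
  have h : Tendsto (fun x => 1 - stdNormalCDF (-x)) atTop (𝓝 (1 - 0)) :=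
    tendsto_const_nhds.sub (tendsto_stdNormalCDF_atBot.comp tendsto_neg_atTop_atBot)
  simp only [sub_zero] at h
  apply h.congr
  intro x
  have := stdNormalCDF_add_neg x
  linarith

noncomputable def Aaux (u : ℝ) : ℝ :=
  u * stdNormalCDF u ^ 2 + 2 * nPdf u * stdNormalCDF u
    - (1 / Real.sqrt Real.pi) * stdNormalCDF (Real.sqrt 2 * u)

lemma nPdf_sq (u : ℝ) :
    2 * nPdf u ^ 2 = (Real.sqrt 2 / Real.sqrt Real.pi) * nPdf (Real.sqrt 2 * u) := by
  unfold nPdf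
  have hπ : Real.sqrt Real.pi ^ 2 = Real.pi := Real.sq_sqrt Real.pi_pos.le
  have hs2 : Real.sqrt 2 ^ 2 = 2 := Real.sq_sqrt (by norm_num)
  have h2π : Real.sqrt (2 * Real.pi) = Real.sqrt 2 * Real.sqrt Real.pi :=
    Real.sqrt_mul (by norm_num) _
  have hexp : Real.exp (-u^2/2) ^ 2 = Real.exp (-(Real.sqrt 2 * u)^2/2) := by
    rw [sq, ← Real.exp_add, mul_pow, hs2]; ring_nf
  rw [h2π, div_pow, mul_pow, hexp]
  have h1 : Real.sqrt 2 > 0 := by positivity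
  have h2 : Real.sqrt Real.pi > 0 := by positivity
  field_simp
  ring_nf
  rw [hs2]

lemma hasDerivAt_Aaux (u : ℝ) : HasDerivAt Aaux (stdNormalCDF u ^ 2) u := by
  have hΦ := hasDerivAt_stdNormalCDF u
  have hφ := hasDerivAt_nPdf u
  have h1 : HasDerivAt (fun u => u * stdNormalCDF u ^ 2)
      (1 * stdNormalCDF u ^ 2 + u * (2 * stdNormalCDF u ^ 1 * nPdf u)) u :=
    (hasDerivAt_id u).mul (hΦ.pow 2)
  have h2 : HasDerivAt (fun u => 2 * nPdf u * stdNormalCDF u)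
      ((2 * (-u * nPdf u)) * stdNormalCDF u + 2 * nPdf u * nPdf u) u :=
    (hφ.const_mul 2).mul hΦ
  have h3 : HasDerivAt (fun u => stdNormalCDF (Real.sqrt 2 * u))
      (nPdf (Real.sqrt 2 * u) * Real.sqrt 2) u := by
    have hm : HasDerivAt (fun y : ℝ => Real.sqrt 2 * y) (Real.sqrt 2) u := by
      simpa using (hasDerivAt_id u).const_mul (Real.sqrt 2)
    exact (hasDerivAt_stdNormalCDF (Real.sqrt 2 * u)).comp u hm
  have := (h1.add h2).sub (h3.const_mul (1 / Real.sqrt Real.pi))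
  refine this.congr_deriv (Eq.symm ?_)
  linear_combination -nPdf_sq u

lemma tendsto_Aaux_atBot : Tendsto Aaux atBot (𝓝 0) := by
  have t1 : Tendsto (fun u => u * stdNormalCDF u ^ 2) atBot (𝓝 0) := by
    refine squeeze_zero_norm' ?_ Real.tendsto_exp_atBot
    filter_upwards [Filter.eventually_atBot.2 ⟨-2, fun x hx => hx⟩] with u hu
    have h1 : stdNormalCDF u ≤ Real.exp u := stdNormalCDF_le_exp hu
    have h2 : 0 ≤ stdNormalCDF u := stdNormalCDF_nonneg u
    have h3 : |u| ≤ Real.exp (-u) := by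
      rw [abs_of_nonpos (by linarith)]
      nlinarith [Real.add_one_le_exp (-u)]
    have h4 : Real.exp u ≤ 1 := Real.exp_le_one_iff.2 (by linarith)
    have hΦ2 : stdNormalCDF u ^ 2 ≤ Real.exp u * Real.exp u := by nlinarith
    calc ‖u * stdNormalCDF u ^ 2‖ = |u| * stdNormalCDF u ^ 2 := by
          rw [Real.norm_eq_abs, abs_mul, abs_of_nonneg (sq_nonneg (stdNormalCDF u))]
      _ ≤ Real.exp (-u) * (Real.exp u * Real.exp u) :=
          mul_le_mul h3 hΦ2 (sq_nonneg _) (Real.exp_pos _).le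
      _ = Real.exp u := by rw [← Real.exp_add, ← Real.exp_add]; ring_nf
  have t2 : Tendsto (fun u => 2 * nPdf u * stdNormalCDF u) atBot (𝓝 0) := by
    apply squeeze_zero' (Filter.Eventually.of_forall fun u =>
        mul_nonneg (by nlinarith [nPdf_nonneg u]) (stdNormalCDF_nonneg u))
      (Filter.Eventually.of_forall fun u => ?_)
      (by simpa using tendsto_stdNormalCDF_atBot.const_mul 2)
    · exact mul_le_mul_of_nonneg_right (by nlinarith [nPdf_le_one u, nPdf_nonneg u])
        (stdNormalCDF_nonneg u)
  have t3 : Tendsto (fun u => (1 / Real.sqrt Real.pi) * stdNormalCDF (Real.sqrt 2 * u))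
      atBot (𝓝 0) := by
    have h : Tendsto (fun u : ℝ => Real.sqrt 2 * u) atBot atBot := by
      apply Filter.Tendsto.const_mul_atBot (by positivity) tendsto_id
    simpa using ((tendsto_stdNormalCDF_atBot.comp h).const_mul (1 / Real.sqrt Real.pi))
  have h : Tendsto (fun u => u * stdNormalCDF u ^ 2 + 2 * nPdf u * stdNormalCDF u
      - (Real.sqrt Real.pi)⁻¹ * stdNormalCDF (Real.sqrt 2 * u)) atBot (𝓝 0) := by
    simpa using (t1.add t2).sub t3
  exact h.congr fun u => by unfold Aaux; rw [one_div]

lemma continuous_cdf_sq (σ : ℝ) : Continuous fun x : ℝ => stdNormalCDF (x / σ) ^ 2 :=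
  (continuous_stdNormalCDF.comp (continuous_id.div_const σ)).pow 2

lemma integrableOn_cdf_sq_Iic {σ : ℝ} (hσ : 0 < σ) (a : ℝ) :
    IntegrableOn (fun x => stdNormalCDF (x / σ) ^ 2) (Iic a) := by
  set b := min a (-2 * σ) with hb
  have hba : Iic a ⊆ Iic b ∪ Icc b a := by
    intro x hx; rcases le_or_gt x b with h|h
    · exact Or.inl h
    · exact Or.inr ⟨h.le, hx⟩
  apply IntegrableOn.mono_set _ hba
  apply IntegrableOn.union
  · apply Integrable.mono (integrableOn_exp_mul_Iic (show 0 < 1/σ by positivity) b)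
      (continuous_cdf_sq σ).aestronglyMeasurable.restrict
    filter_upwards [ae_restrict_mem measurableSet_Iic] with x hx
    have hx2 : x / σ ≤ -2 := by
      rw [div_le_iff₀ hσ]
      calc x ≤ b := hx
        _ ≤ -2 * σ := min_le_right _ _
    have h1 := stdNormalCDF_le_exp hx2
    have h2 := stdNormalCDF_nonneg (x/σ)
    have h3 := stdNormalCDF_le_one (x/σ)
    have he : Real.exp (1/σ * x) = Real.exp (x / σ) := by ring_nf
    rw [Real.norm_eq_abs, Real.norm_eq_abs, abs_of_nonneg (sq_nonneg _),
      abs_of_nonneg (Real.exp_pos _).le, he]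
    have h4 : Real.exp (x/σ) ≤ 1 := Real.exp_le_one_iff.2 (by linarith)
    nlinarith
  · exact (continuous_cdf_sq σ).continuousOn.integrableOn_Icc

lemma integrableOn_cdf_neg_sq_Ioi {σ : ℝ} (hσ : 0 < σ) (a : ℝ) :
    IntegrableOn (fun x => stdNormalCDF (-x / σ) ^ 2) (Ioi a) := by
  set b := max a (2 * σ) with hb
  have hba : Ioi a ⊆ Ioc a b ∪ Ioi b := by
    intro x hx; rcases le_or_gt x b with h|h
    · exact Or.inl ⟨hx, h⟩
    · exact Or.inr h
  have hcont : Continuous fun x : ℝ => stdNormalCDF (-x / σ) ^ 2 :=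
    (continuous_stdNormalCDF.comp ((continuous_id.neg).div_const σ)).pow 2
  apply IntegrableOn.mono_set _ hba
  apply IntegrableOn.union
  · exact (hcont.continuousOn.integrableOn_Icc).mono_set Ioc_subset_Icc_self
  · apply Integrable.mono (exp_neg_integrableOn_Ioi b (show 0 < 1/σ by positivity))
      hcont.aestronglyMeasurable.restrict
    filter_upwards [ae_restrict_mem measurableSet_Ioi] with x hx
    have hx2 : -x / σ ≤ -2 := by
      rw [div_le_iff₀ hσ]
      have : 2 * σ ≤ x := le_of_lt (lt_of_le_of_lt (le_max_right a _) hx)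
      linarith
    have h1 := stdNormalCDF_le_exp hx2
    have h2 := stdNormalCDF_nonneg (-x/σ)
    have h3 := stdNormalCDF_le_one (-x/σ)
    have he : Real.exp (-(1/σ) * x) = Real.exp (-x / σ) := by ring_nf
    rw [Real.norm_eq_abs, Real.norm_eq_abs, abs_of_nonneg (sq_nonneg _),
      abs_of_nonneg (Real.exp_pos _).le, he]
    have h4 : Real.exp (-x/σ) ≤ 1 := Real.exp_le_one_iff.2 (by nlinarith)
    nlinarith

lemma integral_Iic_cdf_sq {σ : ℝ} (hσ : 0 < σ) (a : ℝ) :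
    ∫ x in Iic a, stdNormalCDF (x / σ) ^ 2 = σ * Aaux (a / σ) := by
  have hderiv : ∀ x ∈ Iic a, HasDerivAt (fun x => σ * Aaux (x / σ))
      (stdNormalCDF (x / σ) ^ 2) x := by
    intro x _
    have h1 : HasDerivAt (fun x : ℝ => x / σ) (1 / σ) x := by
      simpa using (hasDerivAt_id x).div_const σ
    have h3 := ((hasDerivAt_Aaux (x / σ)).comp x h1).const_mul σ
    refine h3.congr_deriv (Eq.symm ?_)
    field_simp
  have ht : Tendsto (fun x => σ * Aaux (x / σ)) atBot (𝓝 0) := by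
    have h : Tendsto (fun x : ℝ => x / σ) atBot atBot := tendsto_id.atBot_div_const hσ
    simpa using (tendsto_Aaux_atBot.comp h).const_mul σ
  have := integral_Iic_of_hasDerivAt_of_tendsto' hderiv (integrableOn_cdf_sq_Iic hσ a) ht
  rw [this]; ring

lemma integral_Ioi_cdf_sq {σ : ℝ} (hσ : 0 < σ) (a : ℝ) :
    ∫ x in Ioi a, stdNormalCDF (-x / σ) ^ 2 = σ * Aaux (-a / σ) := by
  have hderiv : ∀ x ∈ Ici a, HasDerivAt (fun x => -σ * Aaux (-x / σ))
      (stdNormalCDF (-x / σ) ^ 2) x := by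
    intro x _
    have h1 : HasDerivAt (fun x : ℝ => -x / σ) (-1 / σ) x := by
      simpa using ((hasDerivAt_id x).neg).div_const σ
    have h3 := ((hasDerivAt_Aaux (-x / σ)).comp x h1).const_mul (-σ)
    refine h3.congr_deriv (Eq.symm ?_)
    field_simp
  have ht : Tendsto (fun x => -σ * Aaux (-x / σ)) atTop (𝓝 0) := by
    have h : Tendsto (fun x : ℝ => -x / σ) atTop atBot :=
      (tendsto_neg_atTop_atBot).atBot_div_const hσ
    simpa using (tendsto_Aaux_atBot.comp h).const_mul (-σ)
  have := integral_Ioi_of_hasDerivAt_of_tendsto' hderiv (integrableOn_cdf_neg_sq_Ioi hσ a) ht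
  rw [this]; ring

lemma gaussCRPS_eq (y : ℝ) {σ : ℝ} (hσ : 0 < σ) :
    gaussCRPS y σ = 2 * y * stdNormalCDF (y / σ) - y + 2 * (σ * nPdf (y / σ))
      - σ * (1 / Real.sqrt Real.pi) := by
  have hind : ∀ x ∈ Ici y, (stdNormalCDF (x / σ) - (if y ≤ x then (1:ℝ) else 0)) ^ 2
      = stdNormalCDF (-x / σ) ^ 2 := by
    intro x hx
    rw [if_pos (mem_Ici.1 hx)]
    have h := stdNormalCDF_add_neg (x / σ)
    rw [show -x / σ = -(x / σ) by ring]
    linear_combination (stdNormalCDF (x / σ) - 1 - stdNormalCDF (-(x / σ))) * h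
  have hiio : ∀ x ∈ Iio y, (stdNormalCDF (x / σ) - (if y ≤ x then (1:ℝ) else 0)) ^ 2
      = stdNormalCDF (x / σ) ^ 2 := by
    intro x hx
    rw [if_neg (not_le.2 (mem_Iio.1 hx))]
    ring
  have hintIio : IntegrableOn
      (fun x => (stdNormalCDF (x / σ) - (if y ≤ x then (1:ℝ) else 0)) ^ 2) (Iio y) := by
    exact (((integrableOn_cdf_sq_Iic hσ y).mono_set Iio_subset_Iic_self).congr_fun
      (fun x hx => (hiio x hx).symm) measurableSet_Iio)
  have hintIci : IntegrableOn
      (fun x => (stdNormalCDF (x / σ) - (if y ≤ x then (1:ℝ) else 0)) ^ 2) (Ici y) := by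
    rw [integrableOn_Ici_iff_integrableOn_Ioi]
    exact ((integrableOn_cdf_neg_sq_Ioi hσ y).congr_fun
      (fun x hx => (hind x (Ioi_subset_Ici_self hx)).symm) measurableSet_Ioi)
  have hsplit := integral_Iio_add_Ici (μ := volume) hintIio hintIci
  have e1 : (∫ x in Iio y, (stdNormalCDF (x / σ) - (if y ≤ x then (1:ℝ) else 0)) ^ 2)
      = σ * Aaux (y / σ) := by
    rw [setIntegral_congr_fun measurableSet_Iio hiio, ← integral_Iic_eq_integral_Iio,
      integral_Iic_cdf_sq hσ]
  have e2 : (∫ x in Ici y, (stdNormalCDF (x / σ) - (if y ≤ x then (1:ℝ) else 0)) ^ 2)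
      = σ * Aaux (-y / σ) := by
    rw [setIntegral_congr_fun measurableSet_Ici hind, integral_Ici_eq_integral_Ioi,
      integral_Ioi_cdf_sq hσ]
  have hg : gaussCRPS y σ = σ * Aaux (y / σ) + σ * Aaux (-y / σ) := by
    rw [gaussCRPS, ← hsplit, e1, e2]
  rw [hg]
  set z := y / σ with hz
  have hy : σ * z = y := by rw [hz]; field_simp
  have hnegz : -y / σ = -z := by rw [hz]; ring
  rw [hnegz]
  unfold Aaux
  rw [nPdf_neg, show Real.sqrt 2 * -z = -(Real.sqrt 2 * z) by ring]
  have c1 := stdNormalCDF_add_neg z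
  have c2 := stdNormalCDF_add_neg (Real.sqrt 2 * z)
  linear_combination (σ * z * (stdNormalCDF z - stdNormalCDF (-z)) + 2 * σ * nPdf z - y) * c1
    - σ * (1 / Real.sqrt Real.pi) * c2
    + (stdNormalCDF z - stdNormalCDF (-z)) * hy

noncomputable def gForm (y σ : ℝ) : ℝ :=
  2 * y * stdNormalCDF (y / σ) - y + 2 * (σ * nPdf (y / σ)) - σ * (1 / Real.sqrt Real.pi)

lemma hasDerivAt_gForm (y : ℝ) {σ : ℝ} (hσ : 0 < σ) :
    HasDerivAt (gForm y) (2 * nPdf (y / σ) - 1 / Real.sqrt Real.pi) σ := by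
  have hinv : HasDerivAt (fun σ : ℝ => y / σ) (y * -(σ^2)⁻¹) σ := by
    simpa [div_eq_mul_inv] using ((hasDerivAt_inv (ne_of_gt hσ)).const_mul y)
  have hΦ : HasDerivAt (fun σ : ℝ => stdNormalCDF (y / σ))
      (nPdf (y / σ) * (y * -(σ^2)⁻¹)) σ := (hasDerivAt_stdNormalCDF (y/σ)).comp σ hinv
  have hφ : HasDerivAt (fun σ : ℝ => nPdf (y / σ))
      ((-(y/σ) * nPdf (y / σ)) * (y * -(σ^2)⁻¹)) σ := (hasDerivAt_nPdf (y/σ)).comp σ hinv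
  have T1 := hΦ.const_mul (2*y)
  have T3 := ((hasDerivAt_id σ).mul hφ).const_mul 2
  have T4 := (hasDerivAt_id σ).mul_const (1 / Real.sqrt Real.pi)
  have H := ((T1.sub_const y).add T3).sub T4
  have Hf : HasDerivAt (gForm y)
      (2*y*(nPdf (y/σ) * (y * -(σ^2)⁻¹)) + 2*(1 * nPdf (y/σ) + σ *
        ((-(y/σ) * nPdf (y / σ)) * (y * -(σ^2)⁻¹))) - 1 * (1 / Real.sqrt Real.pi)) σ := H
  convert Hf using 1
  field_simp
  ring

lemma hasDerivAt_gaussCRPS (y : ℝ) {σ : ℝ} (hσ : 0 < σ) :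
    HasDerivAt (gaussCRPS y) (2 * nPdf (y / σ) - 1 / Real.sqrt Real.pi) σ := by
  apply (hasDerivAt_gForm y hσ).congr_of_eventuallyEq
  filter_upwards [eventually_gt_nhds hσ] with t ht
  rw [gaussCRPS_eq y ht]; rfl

lemma sqrt_two_eq_exp : Real.sqrt 2 = Real.exp (Real.log 2 / 2) := by
  rw [Real.sqrt_eq_rpow, Real.rpow_def_of_pos (by norm_num)]
  congr 1
  ring

lemma deriv_sign (z : ℝ) :
    (2 * nPdf z - 1 / Real.sqrt Real.pi < 0 ↔ Real.log 2 < z ^ 2) ∧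
    (0 < 2 * nPdf z - 1 / Real.sqrt Real.pi ↔ z ^ 2 < Real.log 2) := by
  have hπ : (0:ℝ) < Real.sqrt Real.pi := Real.sqrt_pos.2 Real.pi_pos
  have h2π : Real.sqrt (2*Real.pi) = Real.sqrt 2 * Real.sqrt Real.pi :=
    Real.sqrt_mul (by norm_num) _
  have hs2 : Real.sqrt 2 > 0 := by positivity
  have key : 2 * nPdf z - 1/Real.sqrt Real.pi
      = (Real.sqrt 2 * Real.exp (-z^2/2) - 1) / Real.sqrt Real.pi := by
    unfold nPdf
    rw [h2π]
    have hs2' : Real.sqrt 2 * Real.sqrt 2 = 2 := Real.mul_self_sqrt (by norm_num)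
    field_simp
    linear_combination (-Real.exp (-(z^2/2))) * hs2'
  have hnum : Real.sqrt 2 * Real.exp (-z^2/2) = Real.exp (Real.log 2 / 2 + -z^2/2) := by
    rw [sqrt_two_eq_exp, ← Real.exp_add]
  constructor
  · rw [key, div_lt_iff₀ hπ, zero_mul, sub_neg, hnum,
      show (1:ℝ) = Real.exp 0 by simp, Real.exp_lt_exp]
    constructor <;> intro h <;> linarith
  · rw [key, lt_div_iff₀ hπ, zero_mul, sub_pos, hnum,
      show (1:ℝ) = Real.exp 0 by simp, Real.exp_lt_exp]
    constructor <;> intro h <;> linarith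

lemma threshold {y σ : ℝ} (hy : y ≠ 0) (hσ : 0 < σ) :
    (Real.log 2 < (y / σ) ^ 2 ↔ σ < |y| / Real.sqrt (Real.log 2)) ∧
    ((y / σ) ^ 2 < Real.log 2 ↔ |y| / Real.sqrt (Real.log 2) < σ) := by
  have hl2 : 0 < Real.log 2 := Real.log_pos one_lt_two
  have hsl : 0 < Real.sqrt (Real.log 2) := Real.sqrt_pos.2 hl2
  have hay : 0 < |y| := abs_pos.2 hy
  have hsq : Real.sqrt (Real.log 2) ^ 2 = Real.log 2 := Real.sq_sqrt hl2.le
  have hyz : (y/σ)^2 = |y|^2 / σ^2 := by rw [div_pow, sq_abs]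
  constructor
  · rw [hyz, lt_div_iff₀ (by positivity), lt_div_iff₀ hsl,
      ← pow_lt_pow_iff_left₀ (by positivity) hay.le (two_ne_zero), mul_pow, hsq]
    constructor <;> intro h <;> nlinarith
  · rw [hyz, div_lt_iff₀ (by positivity), div_lt_iff₀ hsl,
      ← pow_lt_pow_iff_left₀ hay.le (by positivity) (two_ne_zero), mul_pow, hsq]
    constructor <;> intro h <;> nlinarith

/-- Sign pattern of the derivative of the Gaussian CRPS in `σ`, monotonicity, and
uniqueness of the global minimizer `σ* = |y|/√(ln 2)`. -/
theorem crps_deriv_sign_and_min (y : ℝ) (hy : y ≠ 0) :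
    let σstar : ℝ := |y| / Real.sqrt (Real.log 2)
    (∀ σ ∈ Set.Ioo (0 : ℝ) σstar, deriv (gaussCRPS y) σ < 0) ∧
    (∀ σ ∈ Set.Ioi σstar, 0 < deriv (gaussCRPS y) σ) ∧
    StrictAntiOn (gaussCRPS y) (Set.Ioc 0 σstar) ∧
    StrictMonoOn (gaussCRPS y) (Set.Ici σstar) ∧
    (∀ σ : ℝ, 0 < σ → σ ≠ σstar → gaussCRPS y σstar < gaussCRPS y σ) := by
  intro σstar
  have hl2 : 0 < Real.log 2 := Real.log_pos one_lt_two
  have hstar : 0 < σstar := div_pos (abs_pos.2 hy) (Real.sqrt_pos.2 hl2)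
  have hderivneg : ∀ σ ∈ Set.Ioo (0:ℝ) σstar, deriv (gaussCRPS y) σ < 0 := by
    intro σ hσ
    rw [(hasDerivAt_gaussCRPS y hσ.1).deriv]
    exact (deriv_sign (y/σ)).1.2 ((threshold hy hσ.1).1.2 hσ.2)
  have hderivpos : ∀ σ ∈ Set.Ioi σstar, 0 < deriv (gaussCRPS y) σ := by
    intro σ hσ
    have hσ0 : 0 < σ := lt_trans hstar hσ
    rw [(hasDerivAt_gaussCRPS y hσ0).deriv]
    exact (deriv_sign (y/σ)).2.2 ((threshold hy hσ0).2.2 hσ)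
  have hanti : StrictAntiOn (gaussCRPS y) (Set.Ioc 0 σstar) := by
    apply strictAntiOn_of_deriv_neg (convex_Ioc 0 σstar)
    · intro σ hσ
      exact (hasDerivAt_gaussCRPS y hσ.1).continuousAt.continuousWithinAt
    · intro σ hσ
      rw [interior_Ioc] at hσ
      exact hderivneg σ hσ
  have hmono : StrictMonoOn (gaussCRPS y) (Set.Ici σstar) := by
    apply strictMonoOn_of_deriv_pos (convex_Ici σstar)
    · intro σ hσ
      exact (hasDerivAt_gaussCRPS y (lt_of_lt_of_le hstar hσ)).continuousAt.continuousWithinAt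
    · intro σ hσ
      rw [interior_Ici] at hσ
      exact hderivpos σ hσ
  refine ⟨hderivneg, hderivpos, hanti, hmono, ?_⟩
  intro σ hσ0 hσne
  rcases lt_or_gt_of_ne hσne with h | h
  · exact hanti ⟨hσ0, h.le⟩ ⟨hstar, le_refl _⟩ h
  · exact hmono (le_refl σstar) (le_of_lt h) h
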